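/- arXiv:2401.16667 — 2 statements merged into one kernel-verified Lean document; each statement's English description precedes it below -/
import Mathlib

section
/- Sub-Gaussian moment generating function bound for the empirical distribution function under sampling without replacement (Lemma S3). Let a_1, …, a_n ∈ ℝ be fixed, let 1 ≤ n₁ ≤ n − 1 with n₀ = n − n₁, and let Z = (Z_1, …, Z_n) be uniformly distributed over {z ∈ {0,1}ⁿ : Σ_i z_i = n₁}. For y ∈ ℝ define Ĝ(Z, y) = n₁⁻¹ Σ_i Z_i·1{a_i ≤ y} and G(y) = n⁻¹ Σ_i 1{a_i ≤ y}. Then for all y, t ∈ ℝ: E[exp(t(Ĝ(Z, y) − G(y)))] ≤ exp(n₀ t² / (n₁(n + 2))). -/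
open scoped BigOperators Classical

noncomputable section

/-- The set of assignment vectors of a complete randomization: 0–1 vectors of length n
with exactly n₁ ones. -/
def assignSet (n n1 : ℕ) : Finset (Fin n → Bool) :=
  Finset.univ.filter (fun z => (Finset.univ.filter (fun i => z i)).card = n1)

/-- Empirical CDF of the values `a i` over the treated units of `z`. -/
def empCDF {n : ℕ} (n1 : ℕ) (a : Fin n → ℝ) (z : Fin n → Bool) (y : ℝ) : ℝ :=
  ((Finset.univ.filter (fun i => z i ∧ a i ≤ y)).card : ℝ) / (n1 : ℝ)

/-- Finite-population CDF of the values `a i`. -/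
def popCDF {n : ℕ} (a : Fin n → ℝ) (y : ℝ) : ℝ :=
  ((Finset.univ.filter (fun i => a i ≤ y)).card : ℝ) / (n : ℝ)

/-!
Writing `Ĝ(Z, y) - G(y)` as `(K - n₁ m / n) / n₁`, where `m` units satisfy `a i ≤ y` and `K` of
them are treated, the claim is a bound on the centred moment generating function of the
hypergeometric count `K`. Hoeffding's bound `E exp (σ (K - k m / n)) ≤ exp (k σ² / 8)` for a
uniform `k`-subset is proved by induction on `k`: a uniform `(k + 1)`-subset is a uniform point
`x` together with a uniform `k`-subset of the remaining `n - 1` units, and averaging over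
whether `x` is marked is Hoeffding's lemma for a Bernoulli variable. Applied to the treated
group (`k = n₁`) and to the control group (`k = n₀`, whose count is `m - K`) it gives the
exponent `min n₁ n₀ · t² / (8 n₁²)`, and the larger group has at least `n / 2` units.
-/

open Finset Real

open MeasureTheory ProbabilityTheory in
theorem bernoulli_mgf_le {p : ℝ} (hp0 : 0 ≤ p) (hp1 : p ≤ 1) (v : ℝ) :
    p * exp v + (1 - p) ≤ exp (p * v + v ^ 2 / 8) := by
  have hq : 0 ≤ 1 - p := by linarith
  let μ : Measure ℝ := ENNReal.ofReal p • .dirac 1 + ENNReal.ofReal (1 - p) • .dirac 0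
  have : IsProbabilityMeasure μ := ⟨by simp [μ, ← ENNReal.ofReal_add hp0 hq]⟩
  have integral_eq (f : ℝ → ℝ) : ∫ x, f x ∂μ = p * f 1 + (1 - p) * f 0 := by
    rw [integral_add_measure, integral_smul_measure, integral_smul_measure, integral_dirac,
      integral_dirac]
    · simp [ENNReal.toReal_ofReal hp0, ENNReal.toReal_ofReal hq]
    all_goals exact (integrable_dirac (by simp)).smul_measure (by simp)
  have mem_Icc : ∀ᵐ x ∂μ, x ∈ Set.Icc (0 : ℝ) 1 :=
    ae_add_measure_iff.2
      ⟨Measure.ae_smul_measure (by simp) _, Measure.ae_smul_measure (by simp) _⟩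
  have hoeffding := (hasSubgaussianMGF_of_mem_Icc aemeasurable_id mem_Icc).mgf_le v
  simp only [mgf, id, integral_eq] at hoeffding
  norm_num at hoeffding
  have h1 : exp (p * v) * exp (v * (1 - p)) = exp v := by rw [← exp_add]; ring_nf
  have h0 : exp (p * v) * exp (-(v * p)) = 1 := by rw [← exp_add]; ring_nf; exact exp_zero
  calc p * exp v + (1 - p)
      = exp (p * v) * (p * exp (v * (1 - p)) + (1 - p) * exp (-(v * p))) := by
        linear_combination (-p) * h1 - (1 - p) * h0
    _ ≤ exp (p * v) * exp (1 / 4 * v ^ 2 / 2) := by gcongr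
    _ = exp (p * v + v ^ 2 / 8) := by rw [← exp_add]; ring_nf

theorem hoeffding_without_replacement_step (σ : ℝ) {n m k : ℕ} (hmn : m ≤ n + 1)
    (hkn : k ≤ n) :
    m * (exp σ * exp (σ * k * (m - 1) / n + k * σ ^ 2 / 8))
        + (n + 1 - m) * exp (σ * k * m / n + k * σ ^ 2 / 8)
      ≤ (n + 1) * exp (σ * (k + 1) * m / (n + 1) + (k + 1) * σ ^ 2 / 8) := by
  set q : ℝ := m / (n + 1)
  set β : ℝ := 1 - k / n
  set A := exp (σ * k * m / n + k * σ ^ 2 / 8)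
  have hkR : (k : ℝ) ≤ n := by exact_mod_cast hkn
  have hβ0 : 0 ≤ β := sub_nonneg.2 (div_le_one_of_le₀ hkR n.cast_nonneg)
  have hβ1 : β ≤ 1 := sub_le_self _ (by positivity)
  have hq1 : q ≤ 1 := div_le_one_of_le₀ (by exact_mod_cast hmn) (by positivity)
  have hshift : exp σ * exp (σ * k * (m - 1) / n + k * σ ^ 2 / 8) = A * exp (σ * β) := by
    simp only [A, β, ← exp_add]; ring_nf
  -- the two branches average to the population mean: `k / n + q β = (k + 1) / (n + 1)`
  have hmean : σ * k * m / n + q * (σ * β) = σ * (k + 1) * m / (n + 1) := by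
    rcases Nat.eq_zero_or_pos k with rfl | hk0
    · simp [q, β]; ring
    · have : (n : ℝ) ≠ 0 := by exact_mod_cast (by omega : n ≠ 0)
      simp only [q, β]; field_simp; ring
  calc _ = (n + 1) * A * (q * exp (σ * β) + (1 - q)) := by
        rw [hshift]; simp only [q]; field_simp
    _ ≤ (n + 1) * A * exp (q * (σ * β) + (σ * β) ^ 2 / 8) := by
        gcongr; exact bernoulli_mgf_le (by positivity) hq1 _
    _ ≤ (n + 1) * exp (σ * (k + 1) * m / (n + 1) + (k + 1) * σ ^ 2 / 8) := by
        rw [mul_assoc, ← exp_add]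
        gcongr ?_ * exp ?_
        have : (σ * β) ^ 2 ≤ σ ^ 2 := by
          rw [mul_pow]; exact mul_le_of_le_one_right (sq_nonneg σ) (by nlinarith)
        nlinarith

theorem succ_nsmul_sum_powersetCard_succ {α M : Type*} [DecidableEq α] [AddCommMonoid M]
    (s : Finset α) (k : ℕ) (f : Finset α → M) :
    (k + 1) • ∑ u ∈ s.powersetCard (k + 1), f u
      = ∑ x ∈ s, ∑ v ∈ (s.erase x).powersetCard k, f (insert x v) := by
  calc (k + 1) • ∑ u ∈ s.powersetCard (k + 1), f u
      = ∑ u ∈ s.powersetCard (k + 1), ∑ _x ∈ u, f u := by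
        rw [smul_sum]
        refine sum_congr rfl fun u hu => ?_
        rw [sum_const, (mem_powersetCard.1 hu).2]
    _ = ∑ x ∈ s, ∑ u ∈ (s.powersetCard (k + 1)).filter (x ∈ ·), f u :=
        sum_comm' fun u x => by
          simp only [mem_filter, mem_powersetCard]
          exact ⟨fun h => ⟨h, h.1.1 h.2⟩, And.left⟩
    _ = ∑ x ∈ s, ∑ v ∈ (s.erase x).powersetCard k, f (insert x v) := by
        refine sum_congr rfl fun x hx => ?_
        refine sum_nbij' (fun u => u.erase x) (insert x) ?_ ?_ ?_ ?_ ?_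
        all_goals intro u hu; simp only [mem_filter, mem_powersetCard] at hu ⊢
        · obtain ⟨⟨hus, hcard⟩, hxu⟩ := hu
          exact ⟨erase_subset_erase x hus, by rw [card_erase_of_mem hxu, hcard]; rfl⟩
        · have hxu : x ∉ u := fun h => notMem_erase x s (hu.1 h)
          exact ⟨⟨insert_subset hx (hu.1.trans (erase_subset x s)),
            by rw [card_insert_of_notMem hxu, hu.2]⟩, mem_insert_self x u⟩
        · exact insert_erase hu.2
        · exact erase_insert fun h => notMem_erase x s (hu.1 h)
        · rw [insert_erase hu.2]

theorem sum_powersetCard_eq_sum_powersetCard_sdiff {α M : Type*} [DecidableEq α]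
    [AddCommMonoid M] (s : Finset α) {k : ℕ} (hk : k ≤ #s) (f : Finset α → M) :
    ∑ u ∈ s.powersetCard k, f u = ∑ w ∈ s.powersetCard (#s - k), f (s \ w) := by
  refine sum_nbij' (s \ ·) (s \ ·) ?_ ?_ ?_ ?_ ?_
  all_goals intro u hu; simp only [mem_powersetCard] at hu ⊢
  · exact ⟨sdiff_subset, by rw [card_sdiff_of_subset hu.1, hu.2]⟩
  · exact ⟨sdiff_subset, by rw [card_sdiff_of_subset hu.1, hu.2]; omega⟩
  · exact Finset.sdiff_sdiff_eq_self hu.1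
  · exact Finset.sdiff_sdiff_eq_self hu.1
  · rw [Finset.sdiff_sdiff_eq_self hu.1]

section SamplingWithoutReplacement

variable {α : Type*} [DecidableEq α] (p : α → Prop) [DecidablePred p] (σ : ℝ)

theorem sum_powersetCard_erase_exp_card_filter_insert (k : ℕ) (s : Finset α) (x : α) :
    ∑ v ∈ (s.erase x).powersetCard k, exp (σ * #((insert x v).filter p))
      = (if p x then exp σ else 1) * ∑ v ∈ (s.erase x).powersetCard k, exp (σ * #(v.filter p)) := by
  rw [mul_sum]
  refine sum_congr rfl fun v hv => ?_
  have hxv : x ∉ v := fun h => notMem_erase x s ((mem_powersetCard.1 hv).1 h)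
  rw [filter_insert]
  split_ifs
  · rw [card_insert_of_notMem fun h => hxv (mem_filter.1 h).1, ← exp_add]
    push_cast; ring_nf
  · rw [one_mul]

theorem sum_powersetCard_exp_card_filter_le (k : ℕ) (s : Finset α) (hk : k ≤ #s) :
    ∑ u ∈ s.powersetCard k, exp (σ * #(u.filter p))
      ≤ (#s).choose k * exp (σ * k * #(s.filter p) / #s + k * σ ^ 2 / 8) := by
  induction k generalizing s with
  | zero => simp
  | succ k ih =>
    obtain ⟨n, hn⟩ : ∃ n, #s = n + 1 := ⟨#s - 1, by omega⟩
    set m := #(s.filter p)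
    have hmn : m ≤ n + 1 := hn ▸ card_filter_le s p
    have hkn : k ≤ n := by omega
    have insert_term : ∀ x ∈ s,
        ∑ v ∈ (s.erase x).powersetCard k, exp (σ * #((insert x v).filter p))
          ≤ n.choose k * if p x then exp σ * exp (σ * k * (m - 1) / n + k * σ ^ 2 / 8)
            else exp (σ * k * m / n + k * σ ^ 2 / 8) := by
      intro x hx
      have ih_erase := ih (s.erase x) (by rw [card_erase_of_mem hx]; omega)
      rw [card_erase_of_mem hx, hn, Nat.add_sub_cancel] at ih_erase
      rw [sum_powersetCard_erase_exp_card_filter_insert]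
      by_cases hpx : p x
      · have hxm : x ∈ s.filter p := mem_filter.2 ⟨hx, hpx⟩
        have hm : #((s.erase x).filter p) = m - 1 := by
          rw [filter_erase, card_erase_of_mem hxm]
        rw [if_pos hpx, if_pos hpx, mul_left_comm]
        gcongr
        rwa [hm, Nat.cast_pred (show 0 < m from card_pos.2 ⟨x, hxm⟩)] at ih_erase
      · have hm : (s.erase x).filter p = s.filter p := by
          rw [filter_erase, erase_eq_of_notMem fun h => hpx (mem_filter.1 h).2]
        rw [if_neg hpx, if_neg hpx, one_mul]
        simpa [hm] using ih_erase
    have hchoose : ((n : ℝ) + 1) * n.choose k = (k + 1) * (n + 1).choose (k + 1) := by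
      exact_mod_cast (Nat.add_one_mul_choose_eq n k).trans (mul_comm _ _)
    refine le_of_mul_le_mul_left ?_ (by positivity : (0 : ℝ) < k + 1)
    calc ((k : ℝ) + 1) * ∑ u ∈ s.powersetCard (k + 1), exp (σ * #(u.filter p))
        = ∑ x ∈ s, ∑ v ∈ (s.erase x).powersetCard k, exp (σ * #((insert x v).filter p)) := by
          rw [← Nat.cast_succ, ← nsmul_eq_mul]; exact succ_nsmul_sum_powersetCard_succ s k _
      _ ≤ ∑ x ∈ s, n.choose k * if p x then exp σ * exp (σ * k * (m - 1) / n + k * σ ^ 2 / 8)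
          else exp (σ * k * m / n + k * σ ^ 2 / 8) := sum_le_sum insert_term
      _ = n.choose k * (m * (exp σ * exp (σ * k * (m - 1) / n + k * σ ^ 2 / 8))
          + (n + 1 - m) * exp (σ * k * m / n + k * σ ^ 2 / 8)) := by
          rw [← mul_sum, sum_ite, sum_const, sum_const, filter_not,
            card_sdiff_of_subset (filter_subset _ _), hn, nsmul_eq_mul, nsmul_eq_mul,
            Nat.cast_sub hmn]
          push_cast; ring
      _ ≤ n.choose k * ((n + 1) * exp (σ * (k + 1) * m / (n + 1) + (k + 1) * σ ^ 2 / 8)) := by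
          gcongr; exact hoeffding_without_replacement_step σ hmn hkn
      _ = _ := by
          rw [hn]; push_cast
          linear_combination exp (σ * (k + 1) * m / (n + 1) + (k + 1) * σ ^ 2 / 8) * hchoose

theorem sum_powersetCard_exp_centered_le (k : ℕ) (s : Finset α) (hk : k ≤ #s) :
    ∑ u ∈ s.powersetCard k, exp (σ * (#(u.filter p) - k * #(s.filter p) / #s))
      ≤ (#s).choose k * exp (k * σ ^ 2 / 8) := by
  set c := σ * k * #(s.filter p) / #s
  calc _ = exp (-c) * ∑ u ∈ s.powersetCard k, exp (σ * #(u.filter p)) := by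
        rw [mul_sum]
        refine sum_congr rfl fun u _ => ?_
        rw [← exp_add]; simp only [c]; ring_nf
    _ ≤ exp (-c) * ((#s).choose k * exp (c + k * σ ^ 2 / 8)) := by
        gcongr; exact sum_powersetCard_exp_card_filter_le p σ k s hk
    _ = _ := by rw [mul_left_comm, ← exp_add, neg_add_cancel_left]

theorem sum_powersetCard_exp_centered_le_min (k : ℕ) (s : Finset α) (hk : k ≤ #s) :
    ∑ u ∈ s.powersetCard k, exp (σ * (#(u.filter p) - k * #(s.filter p) / #s))
      ≤ (#s).choose k * exp (min k (#s - k) * σ ^ 2 / 8) := by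
  by_cases h : k ≤ #s - k
  · rw [min_eq_left h]; exact sum_powersetCard_exp_centered_le p σ k s hk
  have hs : (#s : ℝ) ≠ 0 := by norm_cast; omega
  rw [min_eq_right (by omega), sum_powersetCard_eq_sum_powersetCard_sdiff s hk,
    ← Nat.choose_symm hk]
  -- a sample and its complement in `s` deviate from their means by opposite amounts
  have hcompl : ∀ w ∈ s.powersetCard (#s - k),
      σ * (#((s \ w).filter p) - k * #(s.filter p) / #s)
        = -σ * (#(w.filter p) - (#s - k : ℕ) * #(s.filter p) / #s) := by
    intro w hw
    have hws := (mem_powersetCard.1 hw).1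
    have hsplit : (s \ w).filter p = s.filter p \ w.filter p := by
      ext x; simp only [mem_filter, mem_sdiff]; tauto
    rw [hsplit, card_sdiff_of_subset (filter_subset_filter p hws),
      Nat.cast_sub (card_le_card (filter_subset_filter p hws)), Nat.cast_sub hk]
    field_simp; ring
  rw [sum_congr rfl fun w hw => congrArg exp (hcompl w hw)]
  simpa [Nat.sub_sub_self hk] using
    sum_powersetCard_exp_centered_le p (-σ) (#s - k) s (Nat.sub_le _ _)

end SamplingWithoutReplacement

theorem sum_assignSet_eq_sum_powersetCard {M : Type*} [AddCommMonoid M] (n k : ℕ)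
    (g : Finset (Fin n) → M) :
    ∑ z ∈ assignSet n k, g (univ.filter fun i => z i) = ∑ u ∈ univ.powersetCard k, g u := by
  refine sum_nbij' (fun z => univ.filter fun i => z i) (fun u i => decide (i ∈ u))
    ?_ ?_ ?_ ?_ ?_
  all_goals intro z hz
  · simpa [assignSet] using hz
  · simpa [assignSet] using hz
  · funext i; simp
  · ext i; simp
  · rfl

theorem card_assignSet (n k : ℕ) : #(assignSet n k) = n.choose k := by
  rw [card_eq_sum_ones, sum_assignSet_eq_sum_powersetCard n k fun _ => 1, ← card_eq_sum_ones,
    card_powersetCard, card_univ, Fintype.card_fin]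

theorem min_mul_div_sq_le {n n1 : ℕ} (hn1 : 1 ≤ n1) (hn : n1 ≤ n) (t : ℝ) :
    (min n1 (n - n1) : ℕ) * (t / n1) ^ 2 / 8 ≤ ((n : ℝ) - n1) * t ^ 2 / (n1 * (n + 2)) := by
  -- the larger of the two groups has at least `n / 2 ≥ (n + 2) / 8` units
  have key : min n1 (n - n1) * (n + 2) ≤ 8 * n1 * (n - n1) := by
    rcases le_total n1 (n - n1) with h | h
    · calc min n1 (n - n1) * (n + 2) = n1 * (n + 2) := by rw [min_eq_left h]
        _ ≤ n1 * (8 * (n - n1)) := Nat.mul_le_mul_left _ (by omega)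
        _ = 8 * n1 * (n - n1) := by ring
    · calc min n1 (n - n1) * (n + 2) = (n - n1) * (n + 2) := by rw [min_eq_right h]
        _ ≤ (n - n1) * (8 * n1) := Nat.mul_le_mul_left _ (by omega)
        _ = 8 * n1 * (n - n1) := by ring
  have keyR : (min n1 (n - n1) : ℕ) * ((n : ℝ) + 2) ≤ 8 * n1 * ((n : ℝ) - n1) := by
    rw [← Nat.cast_sub hn]; exact_mod_cast key
  have hn1R : (0 : ℝ) < n1 := by exact_mod_cast hn1
  calc (min n1 (n - n1) : ℕ) * (t / n1) ^ 2 / 8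
      = ((min n1 (n - n1) : ℕ) * ((n : ℝ) + 2)) * t ^ 2 / (8 * n1 ^ 2 * (n + 2)) := by
        field_simp
    _ ≤ (8 * n1 * ((n : ℝ) - n1)) * t ^ 2 / (8 * n1 ^ 2 * (n + 2)) := by gcongr
    _ = ((n : ℝ) - n1) * t ^ 2 / (n1 * (n + 2)) := by field_simp

/-- **Lemma S3** (sub-Gaussian MGF bound for the empirical distribution function under
sampling without replacement): for fixed a₁, …, a_n, 1 ≤ n₁ ≤ n − 1, n₀ = n − n₁, and Z
uniform over the 0–1 vectors with exactly n₁ ones, for all y, t ∈ ℝ: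
E[exp(t(Ĝ(Z, y) − G(y)))] ≤ exp(n₀ t² / (n₁(n + 2))). -/
theorem lemmaS3 (n n1 : ℕ) (hn1 : 1 ≤ n1) (hn1' : n1 + 1 ≤ n) (a : Fin n → ℝ) :
    ∀ y t : ℝ,
      (∑ z ∈ assignSet n n1, Real.exp (t * (empCDF n1 a z y - popCDF a y)))
          / ((assignSet n n1).card : ℝ)
        ≤ Real.exp (((n : ℝ) - (n1 : ℝ)) * t ^ 2 / ((n1 : ℝ) * ((n : ℝ) + 2))) := by
  intro y t
  set p : Fin n → Prop := fun i => a i ≤ y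
  have hn1R : (n1 : ℝ) ≠ 0 := Nat.cast_ne_zero.2 (by omega)
  have hcentre : ∀ z : Fin n → Bool, t * (empCDF n1 a z y - popCDF a y)
      = t / n1 * (#((univ.filter fun i => z i).filter p) - n1 * #(univ.filter p) / n) := by
    intro z
    rw [empCDF, popCDF, filter_filter]
    field_simp
    rfl
  rw [sum_congr rfl fun z _ => congrArg exp (hcentre z), sum_assignSet_eq_sum_powersetCard n n1
      fun u => exp (t / n1 * (#(u.filter p) - n1 * #(univ.filter p) / n)), card_assignSet,
    div_le_iff₀' (by exact_mod_cast Nat.choose_pos (by omega))]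
  have hbound := sum_powersetCard_exp_centered_le_min p (t / n1) n1 univ (by simp; omega)
  simp only [card_univ, Fintype.card_fin] at hbound
  refine hbound.trans (mul_le_mul_of_nonneg_left (exp_le_exp.2 ?_) (Nat.cast_nonneg _))
  exact min_mul_div_sq_le hn1 (by omega) t

end
end

section
/- Exact cross-moment identity in paired experiments (from the proof of Theorem S2). In a paired randomized experiment, for every pair m: E[(τ̂ − τ)(τ̂_m − τ̂)²] = 2·( (τ_m − L_m)²/M − σ²/n )·(τ_m − τ), where L_m = Y_{m2}(1) − Y_{m1}(0) and σ² = n·Var(τ̂) = (2/M) Σ_{m'=1}^{M} (τ_{m'} − L_{m'})². -/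
open Filter MeasureTheory
open scoped BigOperators Classical

noncomputable section

/-- The standard normal cumulative distribution function. -/
def stdNormalCDF (t : ℝ) : ℝ :=
  ∫ x in Set.Iic t, Real.exp (-x ^ 2 / 2) / Real.sqrt (2 * Real.pi)

/-- The standard normal density. -/
def stdNormalPDF (x : ℝ) : ℝ := Real.exp (-x ^ 2 / 2) / Real.sqrt (2 * Real.pi)

/-- A design-based paired randomized experiment with M pairs and fixed potential
outcomes: `Ya z` for the first unit and `Yb z` for the second unit of each pair. -/
structure PairExp where
  M : ℕ
  hM : 2 ≤ M
  Ya1 : Fin M → ℝ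
  Ya0 : Fin M → ℝ
  Yb1 : Fin M → ℝ
  Yb0 : Fin M → ℝ

namespace PairExp

variable (E : PairExp)

/-- Total number of units: n = 2M. -/
def n : ℕ := 2 * E.M

/-- Sample space: within each pair, whether the first unit is treated. -/
def Ω : Type := Fin E.M → Bool

instance : Fintype E.Ω := inferInstanceAs (Fintype (Fin E.M → Bool))

/-- Probability of an event under the uniform paired randomization. -/
def pr (p : E.Ω → Prop) : ℝ :=
  ((Finset.univ.filter p).card : ℝ) / (Fintype.card E.Ω : ℝ)

/-- Expectation under the uniform paired randomization. -/
def expect (X : E.Ω → ℝ) : ℝ := (∑ ω : E.Ω, X ω) / (Fintype.card E.Ω : ℝ)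

/-- Variance under the uniform paired randomization. -/
def var (X : E.Ω → ℝ) : ℝ := E.expect (fun ω => (X ω - E.expect X) ^ 2)

/-- Pair-level ATE. -/
def taum (m : Fin E.M) : ℝ :=
  (E.Ya1 m + E.Yb1 m) / 2 - (E.Ya0 m + E.Yb0 m) / 2

/-- Average treatment effect. -/
def tau : ℝ := (∑ m, E.taum m) / (E.M : ℝ)

/-- Pair-level difference of observed outcomes. -/
def hattaum (ω : E.Ω) (m : Fin E.M) : ℝ :=
  if ω m then E.Ya1 m - E.Yb0 m else E.Yb1 m - E.Ya0 m

/-- ATE estimator τ̂. -/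
def hattau (ω : E.Ω) : ℝ := (∑ m, E.hattaum ω m) / (E.M : ℝ)

/-- σ² = n Var(τ̂). -/
def sigmaSq : ℝ := (E.n : ℝ) * E.var E.hattau

/-- Neyman-type variance estimator σ̂²_pair. -/
def hatSigmaPairSq (ω : E.Ω) : ℝ :=
  2 / ((E.M : ℝ) - 1) * ∑ m, (E.hattaum ω m - E.hattau ω) ^ 2

/-- σ²_pair = E[σ̂²_pair]. -/
def sigmaPairSq : ℝ := E.expect E.hatSigmaPairSq

/-- The imputation constant Δ = τ̂. -/
def Delta (ω : E.Ω) : ℝ := E.hattau ω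

/-- Constant-treatment-effect imputation of Y(1), first unit of each pair. -/
def Yimp1a (ω : E.Ω) (m : Fin E.M) : ℝ :=
  if ω m then E.Ya1 m else E.Ya0 m + E.Delta ω

/-- Constant-treatment-effect imputation of Y(0), first unit of each pair. -/
def Yimp0a (ω : E.Ω) (m : Fin E.M) : ℝ :=
  if ω m then E.Ya1 m - E.Delta ω else E.Ya0 m

/-- Constant-treatment-effect imputation of Y(1), second unit of each pair. -/
def Yimp1b (ω : E.Ω) (m : Fin E.M) : ℝ :=
  if ω m then E.Yb0 m + E.Delta ω else E.Yb1 m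

/-- Constant-treatment-effect imputation of Y(0), second unit of each pair. -/
def Yimp0b (ω : E.Ω) (m : Fin E.M) : ℝ :=
  if ω m then E.Yb0 m else E.Yb1 m - E.Delta ω

/-- Bootstrap estimand τ*. -/
def tauStar (ω : E.Ω) : ℝ :=
  (∑ m, ((E.Yimp1a ω m - E.Yimp0a ω m) + (E.Yimp1b ω m - E.Yimp0b ω m))) / (E.n : ℝ)

/-- Bootstrap pair-level difference of observed outcomes under assignment ω*. -/
def hattaumStar (ω ωs : E.Ω) (m : Fin E.M) : ℝ :=
  if ωs m then E.Yimp1a ω m - E.Yimp0b ω m else E.Yimp1b ω m - E.Yimp0a ω m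

/-- Bootstrap ATE estimator τ̂*. -/
def hattauStar (ω ωs : E.Ω) : ℝ := (∑ m, E.hattaumStar ω ωs m) / (E.M : ℝ)

/-- Bootstrap Neyman-type variance estimator σ̂*²_pair. -/
def hatSigmaPairSqStar (ω ωs : E.Ω) : ℝ :=
  2 / ((E.M : ℝ) - 1) * ∑ m, (E.hattaumStar ω ωs m - E.hattauStar ω ωs) ^ 2

/-- Bootstrap pivotal statistic T*_pair(ω, ω*). -/
def TStar (ω ωs : E.Ω) : ℝ :=
  Real.sqrt (E.n : ℝ) * (E.hattauStar ω ωs - E.tauStar ω)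
    / Real.sqrt (E.hatSigmaPairSqStar ω ωs)

/-- Scaled studentized statistic T_pair. -/
def Tpair (ω : E.Ω) : ℝ :=
  (Real.sqrt E.sigmaPairSq / Real.sqrt E.sigmaSq) *
    (Real.sqrt (E.n : ℝ) * (E.hattau ω - E.tau) / Real.sqrt (E.hatSigmaPairSq ω))

/-- Pair-level finite-population variance of Y(1) (pair size 2). -/
def S1sq (m : Fin E.M) : ℝ :=
  ((E.Ya1 m - (E.Ya1 m + E.Yb1 m) / 2) ^ 2 + (E.Yb1 m - (E.Ya1 m + E.Yb1 m) / 2) ^ 2)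
    / ((2 : ℝ) - 1)

/-- Pair-level finite-population variance of Y(0). -/
def S0sq (m : Fin E.M) : ℝ :=
  ((E.Ya0 m - (E.Ya0 m + E.Yb0 m) / 2) ^ 2 + (E.Yb0 m - (E.Ya0 m + E.Yb0 m) / 2) ^ 2)
    / ((2 : ℝ) - 1)

/-- Pair-level finite-population variance of individual treatment effects. -/
def Stausq (m : Fin E.M) : ℝ :=
  (((E.Ya1 m - E.Ya0 m) - E.taum m) ^ 2 + ((E.Yb1 m - E.Yb0 m) - E.taum m) ^ 2)
    / ((2 : ℝ) - 1)

/-- Overall marginal CDF of Y(1). -/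
def Gbar (y : ℝ) : ℝ :=
  (((Finset.univ.filter (fun m => E.Ya1 m ≤ y)).card : ℝ)
    + ((Finset.univ.filter (fun m => E.Yb1 m ≤ y)).card : ℝ)) / (E.n : ℝ)

/-- Overall marginal CDF of Y(0). -/
def Fbar (y : ℝ) : ℝ :=
  (((Finset.univ.filter (fun m => E.Ya0 m ≤ y)).card : ℝ)
    + ((Finset.univ.filter (fun m => E.Yb0 m ≤ y)).card : ℝ)) / (E.n : ℝ)

end PairExp

/-!
Write `εᵢ = ±1` for the sign of the assignment in pair `i` and `dᵢ = τᵢ - Lᵢ`. Then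
`τ̂ᵢ = τᵢ + εᵢ dᵢ` and `τ̂ - τ = S / M` with the Rademacher sum `S = ∑ εᵢ dᵢ`, so
`τ̂ₘ - τ̂ = (τₘ - τ) + εₘ dₘ - S / M`. In the expansion of `(τ̂ - τ)(τ̂ₘ - τ̂)²` every term
of odd degree in the signs averages to zero under the global flip `ε ↦ -ε`; the remaining
term `2 (τₘ - τ) (S / M) (εₘ dₘ - S / M)` is computed from the orthogonality
`E[εᵢ εⱼ] = δᵢⱼ`, which also gives `Var τ̂ = ∑ dᵢ² / M²`.
-/

theorem sum_eq_zero_of_involutive_of_apply_eq_neg {α β : Type*} [Fintype α] [AddCommGroup β]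
    [IsAddTorsionFree β] {σ : α → α} (hσ : Function.Involutive σ) {X : α → β}
    (hX : ∀ a, X (σ a) = -X a) : ∑ a, X a = 0 := by
  have h : ∑ a, X (σ a) = ∑ a, X a := Equiv.sum_comp (hσ.toPerm σ) X
  simp only [hX, Finset.sum_neg_distrib, neg_eq_iff_add_eq_zero, ← two_nsmul] at h
  exact two_nsmul_eq_zero.mp h

section SignCube

variable {ι : Type*} [Fintype ι]

def boolSign (b : Bool) : ℝ := if b then 1 else -1

@[simp]
theorem boolSign_not (b : Bool) : boolSign (!b) = -boolSign b := by
  cases b <;> simp [boolSign]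

@[simp]
theorem boolSign_mul_self (b : Bool) : boolSign b * boolSign b = 1 := by
  cases b <;> simp [boolSign]

theorem sum_boolSign_mul_boolSign_of_ne [DecidableEq ι] {i j : ι} (hij : i ≠ j) :
    ∑ ω : ι → Bool, boolSign (ω i) * boolSign (ω j) = 0 := by
  refine sum_eq_zero_of_involutive_of_apply_eq_neg
    (σ := fun ω => Function.update ω i (!ω i)) (fun ω => by simp) (fun ω => ?_)
  simp [Function.update_of_ne hij.symm]

def signedSum (d : ι → ℝ) (ω : ι → Bool) : ℝ := ∑ i, boolSign (ω i) * d i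

theorem signedSum_not (d : ι → ℝ) (ω : ι → Bool) :
    signedSum d (fun i => !ω i) = -signedSum d ω := by
  simp [signedSum, Finset.sum_neg_distrib]

theorem sum_signedSum [DecidableEq ι] (d : ι → ℝ) : ∑ ω : ι → Bool, signedSum d ω = 0 :=
  sum_eq_zero_of_involutive_of_apply_eq_neg (σ := fun ω i => !ω i) (fun ω => by simp)
    (signedSum_not d)

theorem sum_boolSign_mul_signedSum [DecidableEq ι] (d : ι → ℝ) (j : ι) :
    ∑ ω : ι → Bool, boolSign (ω j) * signedSum d ω = Fintype.card (ι → Bool) * d j := by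
  calc ∑ ω : ι → Bool, boolSign (ω j) * signedSum d ω
      = ∑ i, d i * ∑ ω : ι → Bool, boolSign (ω j) * boolSign (ω i) := by
        simp only [signedSum, Finset.mul_sum]
        rw [Finset.sum_comm]
        exact Finset.sum_congr rfl fun _ _ => Finset.sum_congr rfl fun _ _ => by ring
    _ = d j * ∑ ω : ι → Bool, boolSign (ω j) * boolSign (ω j) :=
        Finset.sum_eq_single j
          (fun i _ hij => by rw [sum_boolSign_mul_boolSign_of_ne hij.symm, mul_zero]) (by simp)
    _ = Fintype.card (ι → Bool) * d j := by simp [mul_comm]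

theorem sum_signedSum_sq [DecidableEq ι] (d : ι → ℝ) :
    ∑ ω : ι → Bool, signedSum d ω ^ 2 = Fintype.card (ι → Bool) * ∑ i, d i ^ 2 := by
  calc ∑ ω : ι → Bool, signedSum d ω ^ 2
      = ∑ i, d i * ∑ ω : ι → Bool, boolSign (ω i) * signedSum d ω := by
        simp only [sq, Finset.mul_sum]
        conv_lhs => enter [2, ω, 1]; rw [signedSum]
        simp only [Finset.sum_mul]
        rw [Finset.sum_comm]
        exact Finset.sum_congr rfl fun _ _ => Finset.sum_congr rfl fun _ _ => by ring
    _ = Fintype.card (ι → Bool) * ∑ i, d i ^ 2 := by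
        simp only [sum_boolSign_mul_signedSum, Finset.mul_sum]
        exact Finset.sum_congr rfl fun _ _ => by ring

end SignCube

namespace PairExp

variable (E : PairExp)

def L (m : Fin E.M) : ℝ := E.Yb1 m - E.Ya0 m

theorem M_ne_zero : (E.M : ℝ) ≠ 0 := by
  have := E.hM
  positivity

-- The lemmas below take `ω : Fin E.M → Bool` rather than `ω : E.Ω` (the same type after
-- unfolding `Ω`) so that they rewrite under the sums produced by `expect_eq_sum_cube`.
theorem expect_eq_sum_cube (X : E.Ω → ℝ) :
    E.expect X = (∑ ω : Fin E.M → Bool, X ω) / Fintype.card (Fin E.M → Bool) :=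
  rfl

theorem hattaum_eq (ω : Fin E.M → Bool) (i : Fin E.M) :
    E.hattaum ω i = E.taum i + boolSign (ω i) * (E.taum i - E.L i) := by
  unfold hattaum taum L boolSign
  cases ω i <;> simp only [if_true, Bool.false_eq_true, if_false] <;> ring

theorem hattau_sub_tau (ω : Fin E.M → Bool) :
    E.hattau ω - E.tau = signedSum (fun i => E.taum i - E.L i) ω / E.M := by
  simp only [hattau, tau, signedSum, hattaum_eq, Finset.sum_add_distrib]
  ring

theorem expect_hattau : E.expect E.hattau = E.tau := by
  have h (ω : Fin E.M → Bool) :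
      E.hattau ω = E.tau + signedSum (fun i => E.taum i - E.L i) ω / E.M := by
    rw [← hattau_sub_tau]; ring
  rw [expect_eq_sum_cube]
  simp only [h, Finset.sum_add_distrib, ← Finset.sum_div, sum_signedSum]
  simp

theorem sigmaSq_div_n :
    E.sigmaSq / E.n = (∑ i, (E.taum i - E.L i) ^ 2) / (E.M : ℝ) ^ 2 := by
  have hcard : (Fintype.card (Fin E.M → Bool) : ℝ) ≠ 0 := by positivity
  have hM := E.M_ne_zero
  rw [sigmaSq, var, expect_hattau, expect_eq_sum_cube, n]
  simp only [hattau_sub_tau, div_pow, ← Finset.sum_div, sum_signedSum_sq]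
  push_cast
  field_simp

end PairExp

/-- **Exact cross-moment identity in paired experiments**: for every pair m,
E[(τ̂ − τ)(τ̂_m − τ̂)²] = 2((τ_m − L_m)²/M − σ²/n)(τ_m − τ), where
L_m = Y_{m2}(1) − Y_{m1}(0) and σ² = n·Var(τ̂). -/
theorem paired_cross_moment_identity (E : PairExp) (m : Fin E.M) :
    E.expect (fun ω => (E.hattau ω - E.tau) * (E.hattaum ω m - E.hattau ω) ^ 2) =
      2 * ((E.taum m - (E.Yb1 m - E.Ya0 m)) ^ 2 / (E.M : ℝ) - E.sigmaSq / (E.n : ℝ)) *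
        (E.taum m - E.tau) := by
  have hcard : (Fintype.card (Fin E.M → Bool) : ℝ) ≠ 0 := by positivity
  have hM := E.M_ne_zero
  have hτ := E.hattau_sub_tau
  rw [show E.Yb1 m - E.Ya0 m = E.L m from rfl, E.sigmaSq_div_n, E.expect_eq_sum_cube]
  set d : Fin E.M → ℝ := fun i => E.taum i - E.L i
  set c := E.taum m - E.tau
  have hsplit (ω : Fin E.M → Bool) :
      (E.hattau ω - E.tau) * (E.hattaum ω m - E.hattau ω) ^ 2 =
        signedSum d ω / E.M * (c ^ 2 + (boolSign (ω m) * d m - signedSum d ω / E.M) ^ 2) +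
          2 * c * (d m / E.M * (boolSign (ω m) * signedSum d ω)
            - signedSum d ω ^ 2 / E.M ^ 2) := by
    rw [show E.hattau ω = E.tau + signedSum d ω / E.M by linarith [hτ ω], E.hattaum_eq]
    ring
  have hodd : ∑ ω : Fin E.M → Bool,
      signedSum d ω / E.M * (c ^ 2 + (boolSign (ω m) * d m - signedSum d ω / E.M) ^ 2) = 0 :=
    sum_eq_zero_of_involutive_of_apply_eq_neg (σ := fun ω i => !ω i) (fun ω => by simp)
      (fun ω => by simp only [signedSum_not, boolSign_not]; ring)
  simp only [hsplit, Finset.sum_add_distrib, hodd, zero_add, ← Finset.mul_sum,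
    Finset.sum_sub_distrib, sum_boolSign_mul_signedSum, ← Finset.sum_div, sum_signedSum_sq]
  field_simp
  ring

end
end
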